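/- Let φ: S → T be a premorphism between restriction semigroups. The following are equivalent: (1) φ satisfies (M): φ(s)φ(t) = φ(st) for all s, t ∈ S; (2) φ satisfies (LM): φ(s t^+)φ(s^* t) = φ(st) for all s, t ∈ S, together with (OP): s ≤ t implies φ(s) ≤ φ(t); (3) φ satisfies (LMr): φ(s t^+)φ(t) = φ(st) for all s, t ∈ S, together with (OP); (4) φ satisfies (LMl): φ(s)φ(s^* t) = φ(st) for all s, t ∈ S, together with (OP). -/

import Mathlib

/-- A (two-sided) restriction semigroup: a semigroup with unary operations
`rstar` (`x ↦ x^*`) and `rplus` (`x ↦ x^+`) satisfying the standard identities. -/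
class RestrictionSemigroup (S : Type*) extends Semigroup S where
  rstar : S → S
  rplus : S → S
  rplus_mul_self : ∀ x : S, rplus x * x = x
  rplus_comm : ∀ x y : S, rplus x * rplus y = rplus y * rplus x
  rplus_rplus_mul : ∀ x y : S, rplus (rplus x * y) = rplus x * rplus y
  mul_rplus : ∀ x y : S, rplus (x * y) * x = x * rplus y
  mul_rstar_self : ∀ x : S, x * rstar x = x
  rstar_comm : ∀ x y : S, rstar x * rstar y = rstar y * rstar x
  rstar_mul_rstar : ∀ x y : S, rstar (x * rstar y) = rstar x * rstar y
  rstar_mul : ∀ x y : S, y * rstar (x * y) = rstar x * y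
  rstar_rplus : ∀ x : S, rstar (rplus x) = rplus x
  rplus_rstar : ∀ x : S, rplus (rstar x) = rstar x

open RestrictionSemigroup

/-- `e` is a projection: `e ∈ P(S) = {s^* : s ∈ S}`. -/
def IsProj {S : Type*} [RestrictionSemigroup S] (e : S) : Prop :=
  ∃ s : S, rstar s = e

/-- The natural partial order: `s ≤ t` iff `s = t f` for some projection `f`. -/
def rle {S : Type*} [RestrictionSemigroup S] (s t : S) : Prop :=
  ∃ f : S, IsProj f ∧ s = t * f

/-- Compatibility: `s ∼ t` iff `s t^* = t s^*` and `t^+ s = s^+ t`. -/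
def compat {S : Type*} [RestrictionSemigroup S] (s t : S) : Prop :=
  s * rstar t = t * rstar s ∧ rplus t * s = rplus s * t

/-!
Under (M) each of the three factorisations `s t = (s t^+)(s^* t) = (s t^+) t = s (s^* t)` is
respected by `φ`, and (M) also gives (OP): if `s ≤ t` then `s = t s^*`, so
`φ s = φ t φ(s^*)`, and (PM2) lets `φ(s^*)` be replaced by the projection `(φ s)^*`.
Conversely, each factorisation writes `s t = a b` with `a ≤ s` and `b ≤ t`, so (OP), (PM1)
and compatibility of `≤` with multiplication squeeze
`φ(s t) = φ a φ b ≤ φ s φ t ≤ φ(s t)`.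
-/

section

variable {S : Type*} [RestrictionSemigroup S]

lemma rstar_rstar (x : S) : rstar (rstar x) = rstar x := by
  simpa only [rplus_rstar] using rstar_rplus (rstar x)

lemma isProj_rstar (x : S) : IsProj (rstar x) := ⟨x, rfl⟩

lemma isProj_rplus (x : S) : IsProj (rplus x) := ⟨rplus x, rstar_rplus x⟩

lemma IsProj.rstar_eq {e : S} (he : IsProj e) : rstar e = e := by
  obtain ⟨s, rfl⟩ := he
  exact rstar_rstar s

lemma IsProj.mul_self {e : S} (he : IsProj e) : e * e = e := by
  nth_rewrite 2 [← he.rstar_eq]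
  exact mul_rstar_self e

lemma IsProj.mul {e f : S} (he : IsProj e) (hf : IsProj f) : IsProj (e * f) :=
  ⟨e * f, by rw [← hf.rstar_eq, rstar_mul_rstar, he.rstar_eq, hf.rstar_eq]⟩

lemma IsProj.mul_comm {e f : S} (he : IsProj e) (hf : IsProj f) : e * f = f * e := by
  rw [← he.rstar_eq, ← hf.rstar_eq, rstar_comm]

lemma mul_rplus_mul_rstar_mul (s t : S) : s * rplus t * (rstar s * t) = s * t := by
  rw [mul_assoc, ← mul_assoc (rplus t), (isProj_rplus t).mul_comm (isProj_rstar s), mul_assoc,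
    rplus_mul_self, ← mul_assoc, mul_rstar_self]

lemma rle_refl (s : S) : rle s s := ⟨rstar s, isProj_rstar s, (mul_rstar_self s).symm⟩

lemma rle_trans {x y z : S} (hxy : rle x y) (hyz : rle y z) : rle x z := by
  obtain ⟨f, hf, rfl⟩ := hxy
  obtain ⟨g, hg, rfl⟩ := hyz
  exact ⟨g * f, hg.mul hf, mul_assoc z g f⟩

lemma rle_antisymm {x y : S} (hxy : rle x y) (hyx : rle y x) : x = y := by
  obtain ⟨f, hf, hx⟩ := hxy
  obtain ⟨g, hg, hy⟩ := hyx
  have hy' : y = y * (f * g) := by rw [← mul_assoc, ← hx, ← hy]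
  calc x = y * (f * g) * f := by rw [← hy', hx]
    _ = y * (f * f * g) := by rw [mul_assoc, mul_assoc, hg.mul_comm hf, mul_assoc]
    _ = y := by rw [hf.mul_self, ← hy']

lemma eq_mul_rstar_of_rle {s t : S} (h : rle s t) : s = t * rstar s := by
  obtain ⟨f, hf, rfl⟩ := h
  nth_rewrite 2 [← hf.rstar_eq]
  rw [rstar_mul_rstar, ← mul_assoc, mul_rstar_self, hf.rstar_eq]

lemma mul_rplus_rle (s t : S) : rle (s * rplus t) s := ⟨rplus t, isProj_rplus t, rfl⟩

lemma rstar_mul_rle (s t : S) : rle (rstar s * t) t :=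
  ⟨rstar (s * t), isProj_rstar _, (rstar_mul s t).symm⟩

lemma rle_mul_left {x y : S} (h : rle x y) (z : S) : rle (z * x) (z * y) := by
  obtain ⟨f, hf, rfl⟩ := h
  exact ⟨f, hf, (mul_assoc z y f).symm⟩

lemma rle_mul_right {x y : S} (h : rle x y) (z : S) : rle (x * z) (y * z) := by
  obtain ⟨f, hf, rfl⟩ := h
  refine ⟨rstar (f * z), isProj_rstar _, ?_⟩
  rw [mul_assoc, mul_assoc, rstar_mul, hf.rstar_eq]

lemma rle_mul {a b c d : S} (hab : rle a b) (hcd : rle c d) : rle (a * c) (b * d) :=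
  rle_trans (rle_mul_right hab c) (rle_mul_left hcd b)

variable {T : Type*} [RestrictionSemigroup T] {φ : S → T}

lemma rle_map_of_map_mul (hPM2 : ∀ s : S, rle (rstar (φ s)) (φ (rstar s)))
    (hM : ∀ s t : S, φ s * φ t = φ (s * t)) (s t : S) (hst : rle s t) : rle (φ s) (φ t) := by
  have hφs : φ s = φ t * φ (rstar s) := by rw [hM, ← eq_mul_rstar_of_rle hst]
  have hproj : φ (rstar s) * rstar (φ s) = rstar (φ s) := by
    rw [eq_mul_rstar_of_rle (hPM2 s), ← mul_assoc, hM, (isProj_rstar s).mul_self]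
  refine ⟨rstar (φ s), isProj_rstar _, ?_⟩
  rw [← hproj, ← mul_assoc, ← hφs, mul_rstar_self]

lemma map_mul_of_factor (hPM1 : ∀ s t : S, rle (φ s * φ t) (φ (s * t)))
    (hOP : ∀ s t : S, rle s t → rle (φ s) (φ t)) {s t a b : S} (ha : rle a s) (hb : rle b t)
    (hab : φ a * φ b = φ (s * t)) : φ s * φ t = φ (s * t) :=
  rle_antisymm (hPM1 s t) (hab ▸ rle_mul (hOP a s ha) (hOP b t hb))

end

theorem stmt13_general {S T : Type*} [RestrictionSemigroup S] [RestrictionSemigroup T]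
    (φ : S → T)
    (hPM1 : ∀ s t : S, rle (φ s * φ t) (φ (s * t)))
    (hPM2 : ∀ s : S, rle (rstar (φ s)) (φ (rstar s))) :
    List.TFAE
      [∀ s t : S, φ s * φ t = φ (s * t),
       (∀ s t : S, φ (s * rplus t) * φ (rstar s * t) = φ (s * t)) ∧
         (∀ s t : S, rle s t → rle (φ s) (φ t)),
       (∀ s t : S, φ (s * rplus t) * φ t = φ (s * t)) ∧
         (∀ s t : S, rle s t → rle (φ s) (φ t)),
       (∀ s t : S, φ s * φ (rstar s * t) = φ (s * t)) ∧
         (∀ s t : S, rle s t → rle (φ s) (φ t))] := by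
  tfae_have 1 → 2 := fun hM =>
    ⟨fun s t => by rw [hM, mul_rplus_mul_rstar_mul], rle_map_of_map_mul hPM2 hM⟩
  tfae_have 1 → 3 := fun hM =>
    ⟨fun s t => by rw [hM, mul_assoc, rplus_mul_self], rle_map_of_map_mul hPM2 hM⟩
  tfae_have 1 → 4 := fun hM =>
    ⟨fun s t => by rw [hM, ← mul_assoc, mul_rstar_self], rle_map_of_map_mul hPM2 hM⟩
  tfae_have 2 → 1 := fun ⟨hLM, hOP⟩ s t =>
    map_mul_of_factor hPM1 hOP (mul_rplus_rle s t) (rstar_mul_rle s t) (hLM s t)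
  tfae_have 3 → 1 := fun ⟨hLM, hOP⟩ s t =>
    map_mul_of_factor hPM1 hOP (mul_rplus_rle s t) (rle_refl t) (hLM s t)
  tfae_have 4 → 1 := fun ⟨hLM, hOP⟩ s t =>
    map_mul_of_factor hPM1 hOP (rle_refl s) (rstar_mul_rle s t) (hLM s t)
  tfae_finish

theorem stmt13 {S T : Type*} [RestrictionSemigroup S] [RestrictionSemigroup T]
    (φ : S → T)
    (hPM1 : ∀ s t : S, rle (φ s * φ t) (φ (s * t)))
    (hPM2 : ∀ s : S, rle (rstar (φ s)) (φ (rstar s)))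
    (hPM3 : ∀ s : S, rle (rplus (φ s)) (φ (rplus s))) :
    List.TFAE
      [∀ s t : S, φ s * φ t = φ (s * t),
       (∀ s t : S, φ (s * rplus t) * φ (rstar s * t) = φ (s * t)) ∧
         (∀ s t : S, rle s t → rle (φ s) (φ t)),
       (∀ s t : S, φ (s * rplus t) * φ t = φ (s * t)) ∧
         (∀ s t : S, rle s t → rle (φ s) (φ t)),
       (∀ s t : S, φ s * φ (rstar s * t) = φ (s * t)) ∧
         (∀ s t : S, rle s t → rle (φ s) (φ t))] :=
  stmt13_general φ hPM1 hPM2
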